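/- The graph $C(Q_3^-)$, the expansion of $Q_3^-$ along the claw induced by the vertices $000, 100, 010, 001$, is not $\Theta$-graceful; concretely, there is no bijection $f$ from the 11 vertices of $C(Q_3^-)$ onto $\{0,1,\dots,10\}$ such that, for each $i \in \{1,2,3\}$, all four edges of the coordinate-$i$ class receive the same edge label, all four matching edges $v\,v'$ receive the same edge label, and the four class labels are pairwise distinct. -/
import Mathlib

/-- Check that a list of naturals is pairwise distinct with all pairwise
differences at most `10`. -/
def chk (L : List Nat) : Bool :=
  match L with
  | [] => true
  | a :: t => (t.all fun b => a ≠ b && a ≤ b + 10 && b ≤ a + 10) && chk t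

/-- The 11 subset-sums of size at most 2 of `a-10, b-10, c-10, d-10`, shifted
by `+20` into the naturals: are they pairwise distinct with pairwise
differences at most `10`? -/
def okN (a b c d : Nat) : Bool :=
  chk [20, a+10, b+10, c+10, d+10, a+b, a+c, a+d, b+c, b+d, c+d]

/-- For a fixed `a`, no `b, c, d < 21` with `a+b+c+d ∈ {29, 40, 51}` pass the
`okN` test. -/
def innerChk (a : Nat) : Bool := (List.range 21).all fun b =>
  (List.range 21).all fun c => (List.range 21).all fun d =>
  (!(a+b+c+d == 29 || a+b+c+d == 40 || a+b+c+d == 51)) || !(okN a b c d)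

set_option maxHeartbeats 4000000

lemma inner0 : innerChk 0 = true := by decide
lemma inner1 : innerChk 1 = true := by decide
lemma inner2 : innerChk 2 = true := by decide
lemma inner3 : innerChk 3 = true := by decide
lemma inner4 : innerChk 4 = true := by decide
lemma inner5 : innerChk 5 = true := by decide
lemma inner6 : innerChk 6 = true := by decide
lemma inner7 : innerChk 7 = true := by decide
lemma inner8 : innerChk 8 = true := by decide
lemma inner9 : innerChk 9 = true := by decide
lemma inner10 : innerChk 10 = true := by decide
lemma inner11 : innerChk 11 = true := by decide
lemma inner12 : innerChk 12 = true := by decide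
lemma inner13 : innerChk 13 = true := by decide
lemma inner14 : innerChk 14 = true := by decide
lemma inner15 : innerChk 15 = true := by decide
lemma inner16 : innerChk 16 = true := by decide
lemma inner17 : innerChk 17 = true := by decide
lemma inner18 : innerChk 18 = true := by decide
lemma inner19 : innerChk 19 = true := by decide
lemma inner20 : innerChk 20 = true := by decide

set_option maxHeartbeats 4000000

lemma inner_true : ∀ a : Nat, a < 21 → innerChk a = true := by
  intro a ha
  interval_cases a
  exacts [inner0, inner1, inner2, inner3, inner4, inner5, inner6, inner7, inner8,
    inner9, inner10, inner11, inner12, inner13, inner14, inner15, inner16, inner17,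
    inner18, inner19, inner20]

/-- In a 4-cycle whose opposite edges lie in Θ-classes with equal edge labels,
if the two classes have distinct labels then the signed differences of
opposite edges agree. -/
lemma cyc (A B C D : ℤ) (h1 : |A| = |B|) (h2 : |C| = |D|)
    (h3 : A - B = C - D) (h4 : |A| ≠ |C|) : A = B ∧ C = D := by
  rcases abs_eq_abs.1 h1 with hB | hB <;> rcases abs_eq_abs.1 h2 with hD | hD
  · omega
  · omega
  · omega
  · exact absurd (by rw [show A = C by omega]) h4

/-- One pairwise check of `chk`, for entries coming from labels `a, b ∈ [0,10]`. -/
lemma pairOK (u v : ℕ) (x a b : ℤ) (hu : (u : ℤ) = x - a + 20)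
    (hv : (v : ℤ) = x - b + 20) (hne : a ≠ b) (ha0 : 0 ≤ a) (ha1 : a ≤ 10)
    (hb0 : 0 ≤ b) (hb1 : b ≤ 10) :
    (¬ u = v ∧ u ≤ v + 10) ∧ v ≤ u + 10 := by omega



/-- The label of vertex `i` of `C(Q₃⁻)` as an integer.  The vertices of `C(Q₃⁻)`
are indexed by `Fin 11`: the seven vertices `000, 100, 010, 001, 110, 101, 011`
of `Q₃⁻` are `0, 1, 2, 3, 4, 5, 6`, and the four new (primed) vertices
`000', 100', 010', 001'` of the expansion are `7, 8, 9, 10`. -/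
def lab (f : Fin 11 → Fin 11) (i : Fin 11) : ℤ := ((f i : ℕ) : ℤ)

/-- The expansion `C(Q₃⁻)` of `Q₃⁻` along the claw `000, 100, 010, 001` is not
Θ-graceful: there is no bijection `f` of its 11 vertices onto `{0,…,10}` such
that for each coordinate `i ∈ {1,2,3}` the four edges of the coordinate-`i`
Θ-class get the same edge label, the four matching edges get the same edge
label, and the four class labels are pairwise distinct. -/
theorem CQ3minus_not_theta_graceful :
    ¬ ∃ f : Fin 11 → Fin 11, Function.Bijective f ∧
      -- coordinate-1 class: 000–100, 010–110, 001–101, 000'–100'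
      |lab f 0 - lab f 1| = |lab f 2 - lab f 4| ∧
      |lab f 2 - lab f 4| = |lab f 3 - lab f 5| ∧
      |lab f 3 - lab f 5| = |lab f 7 - lab f 8| ∧
      -- coordinate-2 class: 000–010, 100–110, 001–011, 000'–010'
      |lab f 0 - lab f 2| = |lab f 1 - lab f 4| ∧
      |lab f 1 - lab f 4| = |lab f 3 - lab f 6| ∧
      |lab f 3 - lab f 6| = |lab f 7 - lab f 9| ∧
      -- coordinate-3 class: 000–001, 100–101, 010–011, 000'–001'
      |lab f 0 - lab f 3| = |lab f 1 - lab f 5| ∧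
      |lab f 1 - lab f 5| = |lab f 2 - lab f 6| ∧
      |lab f 2 - lab f 6| = |lab f 7 - lab f 10| ∧
      -- matching class: 000–000', 100–100', 010–010', 001–001'
      |lab f 0 - lab f 7| = |lab f 1 - lab f 8| ∧
      |lab f 1 - lab f 8| = |lab f 2 - lab f 9| ∧
      |lab f 2 - lab f 9| = |lab f 3 - lab f 10| ∧
      -- the four class labels are pairwise distinct
      |lab f 0 - lab f 1| ≠ |lab f 0 - lab f 2| ∧
      |lab f 0 - lab f 1| ≠ |lab f 0 - lab f 3| ∧
      |lab f 0 - lab f 1| ≠ |lab f 0 - lab f 7| ∧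
      |lab f 0 - lab f 2| ≠ |lab f 0 - lab f 3| ∧
      |lab f 0 - lab f 2| ≠ |lab f 0 - lab f 7| ∧
      |lab f 0 - lab f 3| ≠ |lab f 0 - lab f 7| := by 
  rintro ⟨f, hf, h1, h2, h3, h4, h5, h6, h7, h8, h9, h10, h11, h12,
    hd1, hd2, hd3, hd4, hd5, hd6⟩
  -- labels are injective and bounded
  have hinj : ∀ i j : Fin 11, i ≠ j → lab f i ≠ lab f j := by
    intro i j hij h
    unfold lab at h
    exact hij (hf.injective (Fin.ext (by exact_mod_cast h)))
  have hb : ∀ i : Fin 11, 0 ≤ lab f i ∧ lab f i ≤ 10 := by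
    intro i
    unfold lab
    have := (f i).isLt
    omega
  -- the sum of all labels is 55
  have hsum : lab f 0 + lab f 1 + lab f 2 + lab f 3 + lab f 4 + lab f 5 +
      lab f 6 + lab f 7 + lab f 8 + lab f 9 + lab f 10 = 55 := by
    have h55 : ∑ i : Fin 11, lab f i = 55 := by
      have := Fintype.sum_bijective f hf (fun i => lab f i)
        (fun j => ((j : ℕ) : ℤ)) (fun i => rfl)
      rw [this]; decide
    have hexp : ∑ i : Fin 11, lab f i = lab f 0 + lab f 1 + lab f 2 + lab f 3 +
        lab f 4 + lab f 5 + lab f 6 + lab f 7 + lab f 8 + lab f 9 + lab f 10 := by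
      rw [show (Finset.univ : Finset (Fin 11)) = {0,1,2,3,4,5,6,7,8,9,10} from by decide]
      simp [Finset.sum_insert, Finset.mem_insert]
      ring
    omega
  have b0 := hb 0; have b1 := hb 1; have b2 := hb 2; have b3 := hb 3
  have b4 := hb 4; have b5 := hb 5; have b6 := hb 6; have b7 := hb 7
  have b8 := hb 8; have b9 := hb 9; have b10 := hb 10
  -- signed differences are constant on each Θ-class (4-cycle consistency)
  obtain ⟨e1, e2⟩ := cyc (lab f 0 - lab f 1) (lab f 2 - lab f 4)
    (lab f 0 - lab f 2) (lab f 1 - lab f 4) h1 h4 (by ring) hd1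
  obtain ⟨e3, e4⟩ := cyc (lab f 0 - lab f 1) (lab f 3 - lab f 5)
    (lab f 0 - lab f 3) (lab f 1 - lab f 5) (h1.trans h2) h7 (by ring) hd2
  obtain ⟨e5, e6⟩ := cyc (lab f 0 - lab f 2) (lab f 3 - lab f 6)
    (lab f 0 - lab f 3) (lab f 2 - lab f 6) (h4.trans h5) (h7.trans h8) (by ring) hd4
  obtain ⟨e7, e8⟩ := cyc (lab f 0 - lab f 7) (lab f 1 - lab f 8)
    (lab f 0 - lab f 1) (lab f 7 - lab f 8) h10 (h1.trans (h2.trans h3)) (by ring) hd3.symm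
  obtain ⟨e9, e10⟩ := cyc (lab f 0 - lab f 7) (lab f 2 - lab f 9)
    (lab f 0 - lab f 2) (lab f 7 - lab f 9) (h10.trans h11) (h4.trans (h5.trans h6)) (by ring) hd5.symm
  obtain ⟨e11, e12⟩ := cyc (lab f 0 - lab f 7) (lab f 3 - lab f 10)
    (lab f 0 - lab f 3) (lab f 7 - lab f 10) (h10.trans (h11.trans h12))
    (h7.trans (h8.trans h9)) (by ring) hd6.symm
  clear h1 h2 h3 h4 h5 h6 h7 h8 h9 h10 h11 h12 hd1 hd2 hd3 hd4 hd5 hd6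
  -- the shifted signed class differences, as naturals
  obtain ⟨A, hA⟩ : ∃ n : ℕ, (n : ℤ) = lab f 0 - lab f 1 + 10 :=
    ⟨_, Int.toNat_of_nonneg (by omega)⟩
  obtain ⟨B, hB⟩ : ∃ n : ℕ, (n : ℤ) = lab f 0 - lab f 2 + 10 :=
    ⟨_, Int.toNat_of_nonneg (by omega)⟩
  obtain ⟨C, hC⟩ : ∃ n : ℕ, (n : ℤ) = lab f 0 - lab f 3 + 10 :=
    ⟨_, Int.toNat_of_nonneg (by omega)⟩
  obtain ⟨D, hD⟩ : ∃ n : ℕ, (n : ℤ) = lab f 0 - lab f 7 + 10 :=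
    ⟨_, Int.toNat_of_nonneg (by omega)⟩
  -- each entry of the `okN` list corresponds to a vertex label
  have w0 : ((20 : ℕ) : ℤ) = lab f 0 - lab f 0 + 20 := by push_cast; ring
  have w1 : ((A+10 : ℕ) : ℤ) = lab f 0 - lab f 1 + 20 := by push_cast; omega
  have w2 : ((B+10 : ℕ) : ℤ) = lab f 0 - lab f 2 + 20 := by push_cast; omega
  have w3 : ((C+10 : ℕ) : ℤ) = lab f 0 - lab f 3 + 20 := by push_cast; omega
  have w4 : ((D+10 : ℕ) : ℤ) = lab f 0 - lab f 7 + 20 := by push_cast; omega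
  have w5 : ((A+B : ℕ) : ℤ) = lab f 0 - lab f 4 + 20 := by push_cast; omega
  have w6 : ((A+C : ℕ) : ℤ) = lab f 0 - lab f 5 + 20 := by push_cast; omega
  have w7 : ((A+D : ℕ) : ℤ) = lab f 0 - lab f 8 + 20 := by push_cast; omega
  have w8 : ((B+C : ℕ) : ℤ) = lab f 0 - lab f 6 + 20 := by push_cast; omega
  have w9 : ((B+D : ℕ) : ℤ) = lab f 0 - lab f 9 + 20 := by push_cast; omega
  have w10 : ((C+D : ℕ) : ℤ) = lab f 0 - lab f 10 + 20 := by push_cast; omega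
  have hkey := inner_true A (by omega)
  simp only [innerChk, List.all_eq_true, List.mem_range, Bool.or_eq_true,
    Bool.not_eq_true', Bool.or_eq_false_iff, beq_eq_false_iff_ne] at hkey
  obtain hfil | hok := hkey B (by omega) C (by omega) D (by omega)
  · -- the sum filter cannot fail: 11·x₀ = 55 + 4S forces S ∈ {-11, 0, 11}
    omega
  · -- but our shifted differences do pass the `okN` test: contradiction
    have hok2 : okN A B C D = true := by
      simp only [okN, chk, List.all_cons, List.all_nil, Bool.and_eq_true, Bool.and_true,
        decide_eq_true_eq, ne_eq]
      exact ⟨⟨pairOK _ _ _ _ _ w0 w1 (hinj 0 1 (by decide)) (hb 0).1 (hb 0).2 (hb 1).1 (hb 1).2, pairOK _ _ _ _ _ w0 w2 (hinj 0 2 (by decide)) (hb 0).1 (hb 0).2 (hb 2).1 (hb 2).2, pairOK _ _ _ _ _ w0 w3 (hinj 0 3 (by decide)) (hb 0).1 (hb 0).2 (hb 3).1 (hb 3).2, pairOK _ _ _ _ _ w0 w4 (hinj 0 7 (by decide)) (hb 0).1 (hb 0).2 (hb 7).1 (hb 7).2, pairOK _ _ _ _ _ w0 w5 (hinj 0 4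 (by decide)) (hb 0).1 (hb 0).2 (hb 4).1 (hb 4).2, pairOK _ _ _ _ _ w0 w6 (hinj 0 5 (by decide)) (hb 0).1 (hb 0).2 (hb 5).1 (hb 5).2, pairOK _ _ _ _ _ w0 w7 (hinj 0 8 (by decide)) (hb 0).1 (hb 0).2 (hb 8).1 (hb 8).2, pairOK _ _ _ _ _ w0 w8 (hinj 0 6 (by decide)) (hb 0).1 (hb 0).2 (hb 6).1 (hb 6).2, pairOK _ _ _ _ _ w0 w9 (hinj 0 9 (by decide)) (hb 0).1 (hb 0).2 (hb 9).1 (hb 9).2, pairOK _ _ _ _ _ w0 w10 (hinj 0 10 (by decide)) (hb 0).1 (hb 0).2 (hb 10).1 (hb 10).2⟩,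
        ⟨pairOK _ _ _ _ _ w1 w2 (hinj 1 2 (by decide)) (hb 1).1 (hb 1).2 (hb 2).1 (hb 2).2, pairOK _ _ _ _ _ w1 w3 (hinj 1 3 (by decide)) (hb 1).1 (hb 1).2 (hb 3).1 (hb 3).2, pairOK _ _ _ _ _ w1 w4 (hinj 1 7 (by decide)) (hb 1).1 (hb 1).2 (hb 7).1 (hb 7).2, pairOK _ _ _ _ _ w1 w5 (hinj 1 4 (by decide)) (hb 1).1 (hb 1).2 (hb 4).1 (hb 4).2, pairOK _ _ _ _ _ w1 w6 (hinj 1 5 (by decide)) (hb 1).1 (hb 1).2 (hb 5).1 (hb 5).2, pairOK _ _ _ _ _ w1 w7 (hinj 1 8 (by decide)) (hb 1).1 (hb 1).2 (hb 8).1 (hb 8).2, pairOK _ _ _ _ _ w1 w8 (hinj 1 6 (by decide)) (hb 1).1 (hb 1).2 (hb 6).1 (hb 6).2, pairOK _ _ _ _ _ w1 w9 (hinj 1 9 (by decide)) (hb 1).1 (hb 1).2 (hb 9).1 (hb 9).2, pairOK _ _ _ _ _ w1 w10 (hinj 1 10 (by decide)) (hb 1).1 (hb 1).2 (hb 10).1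 (hb 10).2⟩,
        ⟨pairOK _ _ _ _ _ w2 w3 (hinj 2 3 (by decide)) (hb 2).1 (hb 2).2 (hb 3).1 (hb 3).2, pairOK _ _ _ _ _ w2 w4 (hinj 2 7 (by decide)) (hb 2).1 (hb 2).2 (hb 7).1 (hb 7).2, pairOK _ _ _ _ _ w2 w5 (hinj 2 4 (by decide)) (hb 2).1 (hb 2).2 (hb 4).1 (hb 4).2, pairOK _ _ _ _ _ w2 w6 (hinj 2 5 (by decide)) (hb 2).1 (hb 2).2 (hb 5).1 (hb 5).2, pairOK _ _ _ _ _ w2 w7 (hinj 2 8 (by decide)) (hb 2).1 (hb 2).2 (hb 8).1 (hb 8).2, pairOK _ _ _ _ _ w2 w8 (hinj 2 6 (by decide)) (hb 2).1 (hb 2).2 (hb 6).1 (hb 6).2, pairOK _ _ _ _ _ w2 w9 (hinj 2 9 (by decide)) (hb 2).1 (hb 2).2 (hb 9).1 (hb 9).2, pairOK _ _ _ _ _ w2 w10 (hinj 2 10 (by decide)) (hb 2).1 (hb 2).2 (hb 10).1 (hb 10).2⟩,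
        ⟨pairOK _ _ _ _ _ w3 w4 (hinj 3 7 (by decide)) (hb 3).1 (hb 3).2 (hb 7).1 (hb 7).2, pairOK _ _ _ _ _ w3 w5 (hinj 3 4 (by decide)) (hb 3).1 (hb 3).2 (hb 4).1 (hb 4).2, pairOK _ _ _ _ _ w3 w6 (hinj 3 5 (by decide)) (hb 3).1 (hb 3).2 (hb 5).1 (hb 5).2, pairOK _ _ _ _ _ w3 w7 (hinj 3 8 (by decide)) (hb 3).1 (hb 3).2 (hb 8).1 (hb 8).2, pairOK _ _ _ _ _ w3 w8 (hinj 3 6 (by decide)) (hb 3).1 (hb 3).2 (hb 6).1 (hb 6).2, pairOK _ _ _ _ _ w3 w9 (hinj 3 9 (by decide)) (hb 3).1 (hb 3).2 (hb 9).1 (hb 9).2, pairOK _ _ _ _ _ w3 w10 (hinj 3 10 (by decide)) (hb 3).1 (hb 3).2 (hb 10).1 (hb 10).2⟩,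
        ⟨pairOK _ _ _ _ _ w4 w5 (hinj 7 4 (by decide)) (hb 7).1 (hb 7).2 (hb 4).1 (hb 4).2, pairOK _ _ _ _ _ w4 w6 (hinj 7 5 (by decide)) (hb 7).1 (hb 7).2 (hb 5).1 (hb 5).2, pairOK _ _ _ _ _ w4 w7 (hinj 7 8 (by decide)) (hb 7).1 (hb 7).2 (hb 8).1 (hb 8).2, pairOK _ _ _ _ _ w4 w8 (hinj 7 6 (by decide)) (hb 7).1 (hb 7).2 (hb 6).1 (hb 6).2, pairOK _ _ _ _ _ w4 w9 (hinj 7 9 (by decide)) (hb 7).1 (hb 7).2 (hb 9).1 (hb 9).2, pairOK _ _ _ _ _ w4 w10 (hinj 7 10 (by decide)) (hb 7).1 (hb 7).2 (hb 10).1 (hb 10).2⟩,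
        ⟨pairOK _ _ _ _ _ w5 w6 (hinj 4 5 (by decide)) (hb 4).1 (hb 4).2 (hb 5).1 (hb 5).2, pairOK _ _ _ _ _ w5 w7 (hinj 4 8 (by decide)) (hb 4).1 (hb 4).2 (hb 8).1 (hb 8).2, pairOK _ _ _ _ _ w5 w8 (hinj 4 6 (by decide)) (hb 4).1 (hb 4).2 (hb 6).1 (hb 6).2, pairOK _ _ _ _ _ w5 w9 (hinj 4 9 (by decide)) (hb 4).1 (hb 4).2 (hb 9).1 (hb 9).2, pairOK _ _ _ _ _ w5 w10 (hinj 4 10 (by decide)) (hb 4).1 (hb 4).2 (hb 10).1 (hb 10).2⟩,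
        ⟨pairOK _ _ _ _ _ w6 w7 (hinj 5 8 (by decide)) (hb 5).1 (hb 5).2 (hb 8).1 (hb 8).2, pairOK _ _ _ _ _ w6 w8 (hinj 5 6 (by decide)) (hb 5).1 (hb 5).2 (hb 6).1 (hb 6).2, pairOK _ _ _ _ _ w6 w9 (hinj 5 9 (by decide)) (hb 5).1 (hb 5).2 (hb 9).1 (hb 9).2, pairOK _ _ _ _ _ w6 w10 (hinj 5 10 (by decide)) (hb 5).1 (hb 5).2 (hb 10).1 (hb 10).2⟩,
        ⟨pairOK _ _ _ _ _ w7 w8 (hinj 8 6 (by decide)) (hb 8).1 (hb 8).2 (hb 6).1 (hb 6).2, pairOK _ _ _ _ _ w7 w9 (hinj 8 9 (by decide)) (hb 8).1 (hb 8).2 (hb 9).1 (hb 9).2, pairOK _ _ _ _ _ w7 w10 (hinj 8 10 (by decide)) (hb 8).1 (hb 8).2 (hb 10).1 (hb 10).2⟩,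
        ⟨pairOK _ _ _ _ _ w8 w9 (hinj 6 9 (by decide)) (hb 6).1 (hb 6).2 (hb 9).1 (hb 9).2, pairOK _ _ _ _ _ w8 w10 (hinj 6 10 (by decide)) (hb 6).1 (hb 6).2 (hb 10).1 (hb 10).2⟩,
        pairOK _ _ _ _ _ w9 w10 (hinj 9 10 (by decide)) (hb 9).1 (hb 9).2 (hb 10).1 (hb 10).2⟩
    rw [hok] at hok2
    exact Bool.false_ne_true hok2
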